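/- arXiv:2505.11389 — 3 statements merged into one kernel-verified Lean document; each statement's English description precedes it below -/
import Mathlib

section
/- Let Z be a measurable space, m ≥ 1, and let h_1,…,h_m : M(Z) → ℝ be functions. Then for every q ≥ 1, every z_1,…,z_q ∈ Z and every χ ∈ M(Z), D^{(q)}_{z_1,…,z_q}(∏_{i=1}^m h_i)(χ) = Σ_{W} Q(D^{[W]}_{z_1,…,z_q}(h_1,…,h_m))(χ), where the sum runs over all words W = (A_1,…,A_q) of length q in the alphabet of nonempty subsets of [m]. -/
open MeasureTheory ProbabilityTheory ENNReal

noncomputable section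

/-- The add-one cost operator `D_z^+`: `(D_z f)(χ) = f(χ + δ_z) - f(χ)`. -/
def addOneCost {Z : Type*} [MeasurableSpace Z] (f : Measure Z → ℝ) (z : Z) :
    Measure Z → ℝ :=
  fun χ => f (χ + Measure.dirac z) - f χ

/-- Iterated add-one cost operator `D^{(q)}_{z_1,…,z_q}`. -/
def iterD {Z : Type*} [MeasurableSpace Z] :
    (q : ℕ) → (Fin q → Z) → (Measure Z → ℝ) → Measure Z → ℝ
  | 0, _, f => f
  | q + 1, z, f => addOneCost (iterD q (fun i => z i.succ) f) (z 0)

/-- `η` is a Poisson random measure on `Z` with intensity `μ`, under the probability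
measure `P`. -/
structure IsPoissonRM {Z Ω : Type*} [MeasurableSpace Z] [MeasurableSpace Ω]
    (P : Measure Ω) (η : Ω → Measure Z) (μ : Measure Z) : Prop where
  meas : ∀ B : Set Z, MeasurableSet B → Measurable fun ω => η ω B
  indep : ∀ (n : ℕ) (B : Fin n → Set Z), (∀ i, MeasurableSet (B i)) →
    Pairwise (Function.onFun Disjoint B) →
    iIndepFun (fun i ω => η ω (B i)) P
  poisson : ∀ B : Set Z, MeasurableSet B → μ B < ⊤ → ∀ n : ℕ,
    P {ω | η ω B = n} =
      ENNReal.ofReal (Real.exp (-(μ B).toReal) * (μ B).toReal ^ n / n.factorial)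
  ae_top : ∀ B : Set Z, MeasurableSet B → μ B = ⊤ → ∀ᵐ ω ∂P, η ω B = ⊤

/-- The operator `D_z^A` acting on `m`-tuples of functionals. -/
def tupleD {Z : Type*} [MeasurableSpace Z] {m : ℕ} (z : Z) (A : Finset (Fin m))
    (F : Fin m → Measure Z → ℝ) : Fin m → Measure Z → ℝ :=
  fun i => if i ∈ A then addOneCost (F i) z else F i

/-- The iterated word operator `D^{[W]}_{z_1,…,z_q}` for a word `W = (A_1,…,A_q)`. -/
def wordD {Z : Type*} [MeasurableSpace Z] {m : ℕ} :
    (q : ℕ) → (Fin q → Z) → (Fin q → Finset (Fin m)) →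
      (Fin m → Measure Z → ℝ) → Fin m → Measure Z → ℝ
  | 0, _, _, F => F
  | q + 1, z, W, F =>
      tupleD (z 0) (W 0) (wordD q (fun i => z i.succ) (fun i => W i.succ) F)

/-- `Σ_{|W| = q} Q(D^{[W]}_{z_1,…,z_q}(F_1,…,F_m))`, the sum over all words of length `q`
in the alphabet of nonempty subsets of `[m]` of the product of the entries of
`D^{[W]}(F_1,…,F_m)`. -/
def wordSum {Z : Type*} [MeasurableSpace Z] {m : ℕ} (q : ℕ) (z : Fin q → Z)
    (F : Fin m → Measure Z → ℝ) : Measure Z → ℝ :=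
  fun χ =>
    ∑ W ∈ Finset.univ.filter (fun W : Fin q → Finset (Fin m) => ∀ ℓ, (W ℓ).Nonempty),
      ∏ i, wordD q z W F i χ

/-!
Writing `h_i(χ + δ_z) = D_z h_i(χ) + h_i(χ)` and expanding the product gives the Leibniz rule
`D_z (∏ h_i) = Σ_{A ≠ ∅} Q(D_z^A(h_1,…,h_m))`: the term `A = ∅` is `∏ h_i(χ)`, which cancels.
Since `D_z` is linear, iterating this rule peels off one letter of the word at a time.
-/

open Finset

section
variable {Z : Type*} [MeasurableSpace Z]

lemma addOneCost_sum {ι : Type*} (s : Finset ι) (f : ι → Measure Z → ℝ) (z : Z) :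
    addOneCost (fun χ => ∑ i ∈ s, f i χ) z = fun χ => ∑ i ∈ s, addOneCost (f i) z χ := by
  funext χ
  simp only [addOneCost, sum_sub_distrib]

variable {m : ℕ}

lemma prod_tupleD (z : Z) (A : Finset (Fin m)) (F : Fin m → Measure Z → ℝ) (χ : Measure Z) :
    ∏ i, tupleD z A F i χ = (∏ i ∈ A, addOneCost (F i) z χ) * ∏ i ∈ Aᶜ, F i χ := by
  rw [← prod_mul_prod_compl A]
  congr 1
  · exact prod_congr rfl fun i hi => by simp [tupleD, hi]
  · exact prod_congr rfl fun i hi => by simp [tupleD, mem_compl.mp hi]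

lemma addOneCost_prod (F : Fin m → Measure Z → ℝ) (z : Z) :
    addOneCost (fun χ => ∏ i, F i χ) z =
      fun χ => ∑ A ∈ univ.filter Finset.Nonempty, ∏ i, tupleD z A F i χ := by
  funext χ
  have expand : ∏ i, F i (χ + Measure.dirac z) =
      ∑ A : Finset (Fin m), (∏ i ∈ A, addOneCost (F i) z χ) * ∏ i ∈ Aᶜ, F i χ := by
    have shift : ∀ i, F i (χ + Measure.dirac z) = addOneCost (F i) z χ + F i χ :=
      fun i => (sub_add_cancel _ _).symm
    simp only [shift, prod_add, powerset_univ, ← compl_eq_univ_sdiff]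
  have nonempty_eq : ({∅}ᶜ : Finset (Finset (Fin m))) = univ.filter Finset.Nonempty := by
    ext A
    simp [nonempty_iff_ne_empty]
  simp only [prod_tupleD, addOneCost, expand, Fintype.sum_eq_add_sum_compl ∅, nonempty_eq]
  simp

lemma sum_filter_forall_fin_succ {β M : Type*} [Fintype β] [AddCommMonoid M] (p : β → Prop)
    [DecidablePred p] (q : ℕ) (f : (Fin (q + 1) → β) → M) :
    ∑ W ∈ univ.filter (fun W : Fin (q + 1) → β => ∀ ℓ, p (W ℓ)), f W =
      ∑ A ∈ univ.filter p, ∑ W ∈ univ.filter (fun W : Fin q → β => ∀ ℓ, p (W ℓ)),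
        f (Fin.cons A W) := by
  rw [← sum_product']
  exact (sum_equiv (Fin.consEquiv fun _ => β) (fun _ => by simp [Fin.forall_fin_succ])
    fun _ _ => rfl).symm

lemma wordSum_zero (z : Fin 0 → Z) (F : Fin m → Measure Z → ℝ) :
    wordSum 0 z F = fun χ => ∏ i, F i χ := by
  funext χ
  simp [wordSum, wordD]

lemma wordSum_succ (q : ℕ) (z : Fin (q + 1) → Z) (F : Fin m → Measure Z → ℝ) :
    wordSum (q + 1) z F = addOneCost (wordSum q (Fin.tail z) F) (z 0) := by
  funext χ
  unfold wordSum
  rw [addOneCost_sum]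
  simp only [addOneCost_prod]
  rw [sum_filter_forall_fin_succ, sum_comm]
  rfl

lemma iterD_prod (F : Fin m → Measure Z → ℝ) :
    ∀ (q : ℕ) (z : Fin q → Z), iterD q z (fun χ => ∏ i, F i χ) = wordSum q z F
  | 0, z => (wordSum_zero z F).symm
  | q + 1, z => by rw [wordSum_succ, ← iterD_prod F q]; rfl

end

theorem iterD_prod_eq_wordSum_general
    {Z : Type*} [MeasurableSpace Z] (m : ℕ)
    (h : Fin m → Measure Z → ℝ)
    (q : ℕ) (z : Fin q → Z) (χ : Measure Z) :
    iterD q z (fun χ' => ∏ i, h i χ') χ =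
      ∑ W ∈ Finset.univ.filter (fun W : Fin q → Finset (Fin m) => ∀ ℓ, (W ℓ).Nonempty),
        ∏ i, wordD q z W h i χ :=
  congrFun (iterD_prod h q z) χ

/-- iterated add-one cost of a product, expressed as a sum over words in
the alphabet of nonempty subsets of `[m]`. -/
theorem iterD_prod_eq_wordSum
    {Z : Type*} [MeasurableSpace Z] (m : ℕ) (hm : 1 ≤ m)
    (h : Fin m → Measure Z → ℝ)
    (q : ℕ) (hq : 1 ≤ q) (z : Fin q → Z) (χ : Measure Z) :
    iterD q z (fun χ' => ∏ i, h i χ') χ =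
      ∑ W ∈ Finset.univ.filter (fun W : Fin q → Finset (Fin m) => ∀ ℓ, (W ℓ).Nonempty),
        ∏ i, wordD q z W h i χ :=
  iterD_prod_eq_wordSum_general m h q z χ

end
end

section
/- Let η be a Poisson random measure on Z with σ-finite intensity μ. Let m ≥ 1, let k_1,…,k_m ≥ 0 be integers, and for i = 1,…,m let F_i := f_i(η) with f_i : M(Z) → ℝ measurable, such that for every ℓ > k_i and μ^ℓ-a.e. (z_1,…,z_ℓ) ∈ Z^ℓ one has D^{(ℓ)}_{z_1,…,z_ℓ} F_i = 0 ℙ-a.s. Let q ≥ 1 and let W = (A_1,…,A_q) be a word of length q in the alphabet of nonempty subsets of [m] such that d_i(W) := #{ℓ ∈ [q] : i ∈ A_ℓ} > k_i for some i ∈ [m]. Then for μ^q-a.e. (z_1,…,z_q) ∈ Z^q, Q(D^{[W]}_{z_1,…,z_q}(F_1,…,F_m)) = 0 ℙ-a.s. -/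
open MeasureTheory ProbabilityTheory ENNReal

noncomputable section

/-! The `i`-th entry of `D^{[W]}_{z_1,…,z_q}(F_1,…,F_m)` is `D^{(d_i(W))} F_i` taken at the
points `z_ℓ` with `i ∈ A_ℓ`, so it vanishes for almost every such subfamily of points once
`d_i(W) > k_i`, and then so does the product. The exceptional set is transported from
`Z^{d_i(W)}` to `Z^q` because forgetting coordinates is quasi-measure-preserving for products of
a σ-finite measure. -/

section RestrictCoordinates

open Function

variable {α ι κ : Type*} [MeasurableSpace α] [Fintype ι] [Fintype κ]

theorem quasiMeasurePreserving_comp_of_injective (μ : Measure α) [SigmaFinite μ]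
    {e : κ → ι} (he : Injective e) :
    Measure.QuasiMeasurePreserving (fun x : ι → α => x ∘ e)
      (Measure.pi fun _ => μ) (Measure.pi fun _ => μ) := by
  classical
  let onRange : κ ≃ {i // i ∈ Set.range e} := Equiv.ofInjective e he
  have hsplit := measurePreserving_piEquivPiSubtypeProd (fun _ : ι => μ) (· ∈ Set.range e)
  let _ : Fintype {i // i ∈ Set.range e} := Subtype.fintype _
  have hreindex :=
    (measurePreserving_piCongrLeft (fun _ : {i // i ∈ Set.range e} => μ) onRange).symm
  exact (hreindex.quasiMeasurePreserving.comp Measure.quasiMeasurePreserving_fst).comp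
    hsplit.quasiMeasurePreserving

theorem ae_comp_of_injective (μ : Measure α) [SigmaFinite μ] {e : κ → ι} (he : Injective e)
    {p : (κ → α) → Prop} (hp : ∀ᵐ y ∂(Measure.pi fun _ => μ), p y) :
    ∀ᵐ x ∂(Measure.pi fun _ : ι => μ), p (x ∘ e) :=
  (quasiMeasurePreserving_comp_of_injective μ he).ae hp

end RestrictCoordinates

section WordOperator

variable {Z : Type*} [MeasurableSpace Z] {m : ℕ}

theorem wordD_succ_apply (q : ℕ) (z : Fin (q + 1) → Z) (W : Fin (q + 1) → Finset (Fin m))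
    (F : Fin m → Measure Z → ℝ) (i : Fin m) :
    wordD (q + 1) z W F i =
      if i ∈ W 0 then addOneCost (wordD q (Fin.tail z) (Fin.tail W) F i) (z 0)
      else wordD q (Fin.tail z) (Fin.tail W) F i :=
  rfl

theorem iterD_succ (c : ℕ) (z : Fin (c + 1) → Z) (f : Measure Z → ℝ) :
    iterD (c + 1) z f = addOneCost (iterD c (Fin.tail z) f) (z 0) :=
  rfl

theorem exists_wordD_apply_eq_iterD (i : Fin m) :
    ∀ (q : ℕ) (W : Fin q → Finset (Fin m)),
      ∃ (c : ℕ) (e : Fin c → Fin q), Function.Injective e ∧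
        c = (Finset.univ.filter fun ℓ => i ∈ W ℓ).card ∧
        ∀ (z : Fin q → Z) (F : Fin m → Measure Z → ℝ),
          wordD q z W F i = iterD c (z ∘ e) (F i)
  | 0, _ => ⟨0, Fin.elim0, fun j => j.elim0, by simp, fun _ _ => rfl⟩
  | q + 1, W => by
    obtain ⟨c, e, he, hc, heq⟩ := exists_wordD_apply_eq_iterD i q (Fin.tail W)
    have hsucc : Function.Injective (Fin.succ ∘ e) := (Fin.succ_injective q).comp he
    by_cases h0 : i ∈ W 0
    · refine ⟨c + 1, Fin.cons 0 (Fin.succ ∘ e), ?_, ?_, fun z F => ?_⟩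
      · exact Fin.cons_injective_iff.2 ⟨fun ⟨j, hj⟩ => Fin.succ_ne_zero _ hj, hsucc⟩
      · rw [Fin.card_filter_univ_succ, if_pos h0, hc]; rfl
      · rw [wordD_succ_apply, if_pos h0, heq, iterD_succ]; rfl
    · refine ⟨c, Fin.succ ∘ e, hsucc, ?_, fun z F => ?_⟩
      · rw [Fin.card_filter_univ_succ, if_neg h0, hc]; rfl
      · rw [wordD_succ_apply, if_neg h0, heq]; rfl

end WordOperator

theorem wordD_prod_eq_zero_of_overused_letter_general
    {Z Ω : Type*} [MeasurableSpace Z] [MeasurableSpace Ω]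
    (P : Measure Ω) (μ : Measure Z) [SigmaFinite μ]
    (η : Ω → Measure Z)
    (m : ℕ) (k : Fin m → ℕ)
    (f : Fin m → Measure Z → ℝ)
    (hvanish : ∀ i, ∀ ℓ : ℕ, k i < ℓ →
      ∀ᵐ z ∂(Measure.pi fun _ : Fin ℓ => μ), ∀ᵐ ω ∂P, iterD ℓ z (f i) (η ω) = 0)
    (q : ℕ) (W : Fin q → Finset (Fin m))
    (i : Fin m)
    (hd : k i < (Finset.univ.filter (fun ℓ : Fin q => i ∈ W ℓ)).card) :
    ∀ᵐ z ∂(Measure.pi fun _ : Fin q => μ), ∀ᵐ ω ∂P,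
      (∏ j, wordD q z W f j (η ω)) = 0 := by
  obtain ⟨c, e, he, rfl, hwordD⟩ := exists_wordD_apply_eq_iterD (Z := Z) i q W
  filter_upwards [ae_comp_of_injective μ he (hvanish i _ hd)] with z hz
  filter_upwards [hz] with ω hω
  exact Finset.prod_eq_zero (Finset.mem_univ i) (by rw [hwordD]; exact hω)

/-- if a word `W` of length `q` uses the letter `i` more than `k_i`
times, then the corresponding product `Q(D^{[W]}(F_1,…,F_m))` vanishes. -/
theorem wordD_prod_eq_zero_of_overused_letter
    {Z Ω : Type*} [MeasurableSpace Z] [MeasurableSpace Ω]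
    (P : Measure Ω) [IsProbabilityMeasure P] (μ : Measure Z) [SigmaFinite μ]
    (η : Ω → Measure Z) (hη : IsPoissonRM P η μ)
    (m : ℕ) (hm : 1 ≤ m) (k : Fin m → ℕ)
    (f : Fin m → Measure Z → ℝ) (hfmeas : ∀ i, Measurable (f i))
    (hvanish : ∀ i, ∀ ℓ : ℕ, k i < ℓ →
      ∀ᵐ z ∂(Measure.pi fun _ : Fin ℓ => μ), ∀ᵐ ω ∂P, iterD ℓ z (f i) (η ω) = 0)
    (q : ℕ) (hq : 1 ≤ q) (W : Fin q → Finset (Fin m)) (hW : ∀ ℓ, (W ℓ).Nonempty)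
    (i : Fin m)
    (hd : k i < (Finset.univ.filter (fun ℓ : Fin q => i ∈ W ℓ)).card) :
    ∀ᵐ z ∂(Measure.pi fun _ : Fin q => μ), ∀ᵐ ω ∂P,
      (∏ j, wordD q z W f j (η ω)) = 0 :=
  wordD_prod_eq_zero_of_overused_letter_general P μ η m k f hvanish q W i hd

end
end

section
/- Let Z be a measurable space, μ a σ-finite measure on Z, and let γ be a Poisson random measure on the product space {0,1} × Z with intensity ν given by ν(C) = μ({z : (0,z) ∈ C}) + μ({z : (1,z) ∈ C}) for measurable C ⊆ {0,1} × Z. For i = 0,1 define γ_i by γ_i(B) := γ({i} × B) for measurable B ⊆ Z. Then γ_0 and γ_1 are each Poisson random measures on Z with intensity μ, and they are independent, i.e., the σ-algebra generated by the family {γ_0(B) : B measurable} is independent of the σ-algebra generated by the family {γ_1(B) : B measurable}. -/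
open MeasureTheory ProbabilityTheory ENNReal

noncomputable section

/-! The marginals are the pull-backs of `γ` along the measurable embeddings `z ↦ (i, z)`, whose
ranges are disjoint. Pulling a Poisson random measure back along an embedding gives a Poisson
random measure with the pulled-back intensity, and here `ν.comap (i, ·) = μ`. By a π-λ argument
on the σ-algebra of measures, independence of the marginals reduces to independence of finitely
many evaluations `γ(0, D₁), …, γ(0, Dₚ)` from `γ(1, E₁), …, γ(1, E_q)`. Splitting the `Dₖ` (and
the `Eₗ`) into the atoms of the Boolean algebra they generate writes these as sums of evaluations
of `γ` on pairwise disjoint sets, which are jointly independent. -/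

open Set Function

section MembershipPattern

variable {Z ι : Type*}

-- The fibres of `membershipPattern D` are the atoms of the Boolean algebra generated by the `D i`.
open Classical in
def membershipPattern (D : ι → Set Z) (z : Z) : ι → Bool := fun i => decide (z ∈ D i)

variable [MeasurableSpace Z] {D : ι → Set Z}

lemma measurable_membershipPattern (hD : ∀ i, MeasurableSet (D i)) :
    Measurable (membershipPattern D) :=
  measurable_pi_lambda _ fun i => measurable_to_bool <| by
    simpa [membershipPattern, Set.preimage] using hD i

lemma measure_eq_sum_membershipPattern_fiber [Fintype ι] [DecidableEq ι]
    (hD : ∀ i, MeasurableSet (D i)) (χ : Measure Z) (i : ι) :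
    χ (D i) = ∑ a ∈ Finset.univ.filter (fun a : ι → Bool => a i = true),
      χ (membershipPattern D ⁻¹' {a}) := by
  rw [sum_measure_preimage_singleton _
    fun a _ => measurable_membershipPattern hD (measurableSet_singleton a)]
  congr 1
  ext z
  simp [membershipPattern]

end MembershipPattern

lemma MeasureTheory.Measure.measurableSpace_eq_comap_pi {Z : Type*} [MeasurableSpace Z] :
    (Measure.instMeasurableSpace : MeasurableSpace (Measure Z)) =
      MeasurableSpace.comap (fun χ (B : {B : Set Z // MeasurableSet B}) => χ B)
        MeasurableSpace.pi := by
  refine le_antisymm (iSup₂_le fun B hB => ?_) ?_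
  · exact MeasurableSpace.comap_le_comap_pi
      (g := fun (B : {B : Set Z // MeasurableSet B}) (χ : Measure Z) => χ B) ⟨B, hB⟩
  · exact (measurable_pi_lambda _ fun B => Measure.measurable_coe B.2).comap_le

lemma ProbabilityTheory.iIndepFun.indepFun_sumElim {Ω ι κ β : Type*} [MeasurableSpace Ω]
    [MeasurableSpace β] {P : Measure Ω} [Fintype ι] [Fintype κ] {X : ι ⊕ κ → Ω → β}
    (h : iIndepFun X P) (hX : ∀ i, Measurable (X i)) :
    IndepFun (fun ω i => X (.inl i) ω) (fun ω j => X (.inr j) ω) P := by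
  classical
  have hST : Disjoint (Finset.univ.map (Embedding.inl : ι ↪ ι ⊕ κ))
      (Finset.univ.map Embedding.inr) := by
    simp [Finset.disjoint_left]
  exact (h.indepFun_finset _ _ hST hX).comp
    (φ := fun (v : Finset.univ.map Embedding.inl → β) i => v ⟨.inl i, by simp⟩)
    (ψ := fun (v : Finset.univ.map Embedding.inr → β) j => v ⟨.inr j, by simp⟩)
    (by fun_prop) (by fun_prop)

lemma ProbabilityTheory.IndepFun.of_forall_finset_measure_apply {Ω Z : Type*}
    [MeasurableSpace Ω] [MeasurableSpace Z] {P : Measure Ω} [IsZeroOrProbabilityMeasure P]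
    {ξ ζ : Ω → Measure Z} (hξ : Measurable ξ) (hζ : Measurable ζ)
    (h : ∀ I J : Finset {B : Set Z // MeasurableSet B},
      IndepFun (fun ω (B : I) => ξ ω B) (fun ω (B : J) => ζ ω B) P) :
    IndepFun ξ ζ P := by
  have hproc := IndepFun.process_indepFun_process
    (X := fun (B : {B : Set Z // MeasurableSet B}) ω => ξ ω B)
    (Y := fun (B : {B : Set Z // MeasurableSet B}) ω => ζ ω B)
    (fun B => (Measure.measurable_coe B.2).comp hξ)
    (fun B => (Measure.measurable_coe B.2).comp hζ) h
  rw [IndepFun_iff_Indep] at hproc ⊢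
  rwa [Measure.measurableSpace_eq_comap_pi, MeasurableSpace.comap_comp,
    MeasurableSpace.comap_comp]

namespace IsPoissonRM

variable {W Z Ω : Type*} [MeasurableSpace W] [MeasurableSpace Z] [MeasurableSpace Ω]
  {P : Measure Ω} {η : Ω → Measure W} {ν : Measure W}

lemma measurable (h : IsPoissonRM P η ν) : Measurable η :=
  Measure.measurable_of_measurable_coe η h.meas

lemma iIndepFun_of_pairwise_disjoint (h : IsPoissonRM P η ν) {ι : Type*} [Finite ι]
    {B : ι → Set W} (hB : ∀ i, MeasurableSet (B i)) (hd : Pairwise (Disjoint on B)) :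
    iIndepFun (fun i ω => η ω (B i)) P := by
  obtain ⟨n, ⟨e⟩⟩ := Finite.exists_equiv_fin ι
  exact iIndepFun.of_precomp e.symm.surjective
    (h.indep n (B ∘ e.symm) (fun k => hB _) (hd.comp_of_injective e.symm.injective))

lemma comap (h : IsPoissonRM P η ν) {f : Z → W} (hf : MeasurableEmbedding f) :
    IsPoissonRM P (fun ω => (η ω).comap f) (ν.comap f) where
  meas B hB := by
    simpa only [hf.comap_apply] using h.meas _ (hf.measurableSet_image' hB)
  indep n B hB hd := by
    simpa only [hf.comap_apply] using h.indep n _ (fun k => hf.measurableSet_image' (hB k))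
      fun k l hkl => (disjoint_image_iff hf.injective).2 (hd hkl)
  poisson B hB hlt n := by
    simpa only [hf.comap_apply] using h.poisson _ (hf.measurableSet_image' hB)
      (by rwa [← hf.comap_apply]) n
  ae_top B hB htop := by
    simpa only [hf.comap_apply] using h.ae_top _ (hf.measurableSet_image' hB)
      (by rwa [← hf.comap_apply])

variable {f g : Z → W} {ι κ : Type*} [Fintype ι] [Fintype κ] {D : ι → Set Z} {E : κ → Set Z}

lemma indepFun_measure_apply_comap_of_pairwise_disjoint (h : IsPoissonRM P η ν)
    (hf : MeasurableEmbedding f) (hg : MeasurableEmbedding g) (hfg : Disjoint (range f) (range g))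
    (hD : ∀ i, MeasurableSet (D i)) (hE : ∀ j, MeasurableSet (E j))
    (hDd : Pairwise (Disjoint on D)) (hEd : Pairwise (Disjoint on E)) :
    IndepFun (fun ω i => (η ω).comap f (D i)) (fun ω j => (η ω).comap g (E j)) P := by
  let B : ι ⊕ κ → Set W := Sum.elim (fun i => f '' D i) (fun j => g '' E j)
  have hB : ∀ k, MeasurableSet (B k) := by
    rintro (i | j)
    · exact hf.measurableSet_image' (hD i)
    · exact hg.measurableSet_image' (hE j)
  have hBd : Pairwise (Disjoint on B) := by
    rintro (i | j) (i' | j') hne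
    · exact (disjoint_image_iff hf.injective).2 (hDd (by simpa using hne))
    · exact hfg.mono (image_subset_range _ _) (image_subset_range _ _)
    · exact hfg.symm.mono (image_subset_range _ _) (image_subset_range _ _)
    · exact (disjoint_image_iff hg.injective).2 (hEd (by simpa using hne))
  simp only [hf.comap_apply, hg.comap_apply]
  exact (h.iIndepFun_of_pairwise_disjoint hB hBd).indepFun_sumElim fun k => h.meas _ (hB k)

lemma indepFun_measure_apply_comap (h : IsPoissonRM P η ν)
    (hf : MeasurableEmbedding f) (hg : MeasurableEmbedding g) (hfg : Disjoint (range f) (range g))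
    (hD : ∀ i, MeasurableSet (D i)) (hE : ∀ j, MeasurableSet (E j)) :
    IndepFun (fun ω i => (η ω).comap f (D i)) (fun ω j => (η ω).comap g (E j)) P := by
  classical
  have hatoms := h.indepFun_measure_apply_comap_of_pairwise_disjoint hf hg hfg
    (fun a => measurable_membershipPattern hD (measurableSet_singleton a))
    (fun b => measurable_membershipPattern hE (measurableSet_singleton b))
    (fun a a' ha => (disjoint_singleton.2 ha).preimage _)
    (fun b b' hb => (disjoint_singleton.2 hb).preimage _)
  convert hatoms.comp
    (φ := fun v i => ∑ a ∈ Finset.univ.filter (fun a : ι → Bool => a i = true), v a)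
    (ψ := fun v j => ∑ b ∈ Finset.univ.filter (fun b : κ → Bool => b j = true), v b)
    (by fun_prop) (by fun_prop) using 1 <;> ext ω
  · simp [measure_eq_sum_membershipPattern_fiber hD]
  · simp [measure_eq_sum_membershipPattern_fiber hE]

lemma indepFun_comap [IsZeroOrProbabilityMeasure P] (h : IsPoissonRM P η ν)
    (hf : MeasurableEmbedding f) (hg : MeasurableEmbedding g)
    (hfg : Disjoint (range f) (range g)) :
    IndepFun (fun ω => (η ω).comap f) (fun ω => (η ω).comap g) P :=
  .of_forall_finset_measure_apply (h.comap hf).measurable (h.comap hg).measurable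
    fun I J => h.indepFun_measure_apply_comap hf hg hfg (fun B : I => B.1.2) (fun B : J => B.1.2)

end IsPoissonRM

theorem poisson_marginals_independent_general
    {Z Ω : Type*} [MeasurableSpace Z] [MeasurableSpace Ω]
    (P : Measure Ω) [IsProbabilityMeasure P] (μ : Measure Z)
    (ν : Measure (Fin 2 × Z))
    (hν : ∀ C : Set (Fin 2 × Z), MeasurableSet C →
      ν C = μ {z | ((0 : Fin 2), z) ∈ C} + μ {z | ((1 : Fin 2), z) ∈ C})
    (γ : Ω → Measure (Fin 2 × Z)) (hγ : IsPoissonRM P γ ν) :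
    IsPoissonRM P (fun ω => (γ ω).comap fun z => ((0 : Fin 2), z)) μ ∧
    IsPoissonRM P (fun ω => (γ ω).comap fun z => ((1 : Fin 2), z)) μ ∧
    IndepFun (fun ω => (γ ω).comap fun z => ((0 : Fin 2), z))
      (fun ω => (γ ω).comap fun z => ((1 : Fin 2), z)) P := by
  have hembed (i : Fin 2) : MeasurableEmbedding (Prod.mk i : Z → Fin 2 × Z) :=
    measurableEmbedding_prodMk_left i
  have hmarginal (i : Fin 2) : ν.comap (Prod.mk i) = μ := by
    ext B hB
    rw [(hembed i).comap_apply, hν _ ((hembed i).measurableSet_image' hB)]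
    fin_cases i <;> simp
  have hdisj : Disjoint (range (Prod.mk 0 : Z → Fin 2 × Z)) (range (Prod.mk 1)) := by
    simp [disjoint_left]
  refine ⟨?_, ?_, hγ.indepFun_comap (hembed 0) (hembed 1) hdisj⟩
  · simpa only [hmarginal] using hγ.comap (hembed 0)
  · simpa only [hmarginal] using hγ.comap (hembed 1)

/-- marking construction: the two marginal point processes of a Poisson
random measure on `{0,1} × Z` with marginal intensities `μ` are independent Poisson
random measures with intensity `μ`. -/
theorem poisson_marginals_independent
    {Z Ω : Type*} [MeasurableSpace Z] [MeasurableSpace Ω]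
    (P : Measure Ω) [IsProbabilityMeasure P] (μ : Measure Z) [SigmaFinite μ]
    (ν : Measure (Fin 2 × Z))
    (hν : ∀ C : Set (Fin 2 × Z), MeasurableSet C →
      ν C = μ {z | ((0 : Fin 2), z) ∈ C} + μ {z | ((1 : Fin 2), z) ∈ C})
    (γ : Ω → Measure (Fin 2 × Z)) (hγ : IsPoissonRM P γ ν) :
    IsPoissonRM P (fun ω => (γ ω).comap fun z => ((0 : Fin 2), z)) μ ∧
    IsPoissonRM P (fun ω => (γ ω).comap fun z => ((1 : Fin 2), z)) μ ∧
    IndepFun (fun ω => (γ ω).comap fun z => ((0 : Fin 2), z))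
      (fun ω => (γ ω).comap fun z => ((1 : Fin 2), z)) P :=
  poisson_marginals_independent_general P μ ν hν γ hγ

end
end
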